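/- Let E be a real vector space, S ⊆ E a nonempty convex subset, n ≥ 1, and f₁, …, fₙ : E → ℝ linear maps. Then { (f₁(ω), …, fₙ(ω)) : ω ∈ S } = ℝⁿ if and only if for every nonzero (l₁, …, lₙ) ∈ ℝⁿ the set { Σᵢ₌₁ⁿ lᵢ·fᵢ(ω) : ω ∈ S } equals all of ℝ. -/

import Mathlib

/-!
Push `S` forward to the convex set `T ⊆ ℝⁿ` of joint values; the condition on `l` says that
every nonzero linear functional maps `T` onto `ℝ`. A point outside `closure T` would be strictly
separated from `T` by some functional `g` (Hahn–Banach), which then misses a value on `T`; so `T`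
is dense. In finite dimensions a dense convex set affinely spans the space, hence has nonempty
interior, and then `interior T = interior (closure T) = ℝⁿ`.
-/

open Set

theorem Convex.dense_of_forall_image_eq_univ
    {E : Type*} [AddCommGroup E] [Module ℝ E] [TopologicalSpace E] [IsTopologicalAddGroup E]
    [ContinuousSMul ℝ E] [LocallyConvexSpace ℝ E]
    {s : Set E} (hs : Convex ℝ s) (hne : s.Nonempty)
    (h : ∀ g : StrongDual ℝ E, g ≠ 0 → g '' s = univ) : Dense s := by
  refine dense_iff_closure_eq.2 (eq_univ_of_forall fun x => by_contra fun hx => ?_)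
  obtain ⟨g, u, hgx, hgs⟩ := geometric_hahn_banach_point_closed hs.closure isClosed_closure hx
  obtain ⟨b, hb⟩ := hne
  have hg : g ≠ 0 := by
    rintro rfl
    exact (hgx.trans (hgs b (subset_closure hb))).false
  obtain ⟨a, ha, hga⟩ : g x ∈ g '' s := h g hg ▸ mem_univ _
  exact (hgx.trans (hgs a (subset_closure ha))).ne' hga

theorem Convex.eq_univ_of_dense
    {V : Type*} [NormedAddCommGroup V] [NormedSpace ℝ V] [FiniteDimensional ℝ V]
    {s : Set V} (hs : Convex ℝ s) (hd : Dense s) : s = univ := by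
  have hspan : affineSpan ℝ s = ⊤ := by
    rw [← AffineSubspace.coe_eq_univ_iff, ← univ_subset_iff, ← hd.closure_eq]
    exact (AffineSubspace.closed_of_finiteDimensional _).closure_subset_iff.2
      (subset_affineSpan ℝ s)
  have hint : (interior s).Nonempty := hs.interior_nonempty_iff_affineSpan_eq_top.2 hspan
  rw [← univ_subset_iff, ← interior_univ, ← hd.closure_eq,
    hs.interior_closure_eq_interior_of_nonempty_interior hint]
  exact interior_subset

theorem Convex.eq_univ_iff_forall_dual_image_eq_univ
    {V : Type*} [NormedAddCommGroup V] [NormedSpace ℝ V] [FiniteDimensional ℝ V]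
    {s : Set V} (hs : Convex ℝ s) (hne : s.Nonempty) :
    s = univ ↔ ∀ g : Module.Dual ℝ V, g ≠ 0 → g '' s = univ := by
  refine ⟨?_, fun h => hs.eq_univ_of_dense <|
    hs.dense_of_forall_image_eq_univ hne fun g hg => ?_⟩
  · rintro rfl g hg
    rw [image_univ, range_eq_univ]
    exact LinearMap.surjective_of_ne_zero hg
  · exact h g fun h0 => hg (ContinuousLinearMap.coe_injective h0)

theorem joint_range_univ_iff_numericalRange_unbounded_general
    {E : Type*} [AddCommGroup E] [Module ℝ E]
    {S : Set E} (hconv : Convex ℝ S) (hne : S.Nonempty)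
    {n : ℕ}
    (f : Fin n → E →ₗ[ℝ] ℝ) :
    ((fun ω => fun i => f i ω) '' S = Set.univ) ↔
      (∀ l : Fin n → ℝ, l ≠ 0 →
        (fun ω => ∑ i, l i * f i ω) '' S = Set.univ) := by
  let T := LinearMap.pi f '' S
  have hcomb (l : Fin n → ℝ) :
      (fun ω => ∑ i, l i * f i ω) '' S = dotProductEquiv ℝ (Fin n) l '' T :=
    (image_image (dotProductEquiv ℝ (Fin n) l) (LinearMap.pi f) S).symm
  change T = univ ↔ _
  rw [(hconv.linear_image _).eq_univ_iff_forall_dual_image_eq_univ (hne.image _)]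
  simp only [hcomb]
  exact ((dotProductEquiv ℝ (Fin n)).toEquiv.forall_congr fun l => by
    rw [LinearEquiv.coe_toEquiv, LinearEquiv.map_ne_zero_iff]).symm

/-- Identity-free version of Proposition 4.2: for a nonempty convex set `S` in
a real vector space `E` and linear maps `f₁, …, fₙ : E → ℝ`, the joint
numerical range `{(f₁(ω),…,fₙ(ω)) : ω ∈ S}` is all of `ℝⁿ` if and only if
every nontrivial linear combination `Σ lᵢ fᵢ` attains every real value on
`S`. -/
theorem joint_range_univ_iff_numericalRange_unbounded
    {E : Type*} [AddCommGroup E] [Module ℝ E]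
    {S : Set E} (hconv : Convex ℝ S) (hne : S.Nonempty)
    {n : ℕ} (hn : 1 ≤ n)
    (f : Fin n → E →ₗ[ℝ] ℝ) :
    ((fun ω => fun i => f i ω) '' S = Set.univ) ↔
      (∀ l : Fin n → ℝ, l ≠ 0 →
        (fun ω => ∑ i, l i * f i ω) '' S = Set.univ) :=
  joint_range_univ_iff_numericalRange_unbounded_general hconv hne f
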